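/- Fix a real β > −1 and integers 1 ≤ r ≤ l. Define Z_β := ∫_0^∞ c^β exp(−c²/2) dc, and for c > 0 define I_{l,r}(c) := (c^{r-1}/(2l-r-1)!) ∫_0^∞ (σ + c) σ^{2l-r-1} exp(−σ²/2 − cσ) dσ. Then ∫_0^∞ I_{l,r}(c) · c^β exp(−c²/2) / Z_β dc = 2^{−(l-r)} · (∏_{i=0}^{r-2} ((β+1)/2 + i/2)) / (∏_{i=0}^{l-2} (β/2 + 1 + i)), where empty products equal 1. -/

import Mathlib

open Finset MeasureTheory

/-- `I l r c` : the limiting probability of a fixed bouquet configuration with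
`r` binary trees spanning `l` marked vertices, in the critical regime `κ = c√N`. -/
noncomputable def I (l r : ℕ) (c : ℝ) : ℝ :=
  (c ^ (r - 1) / (Nat.factorial (2 * l - r - 1) : ℝ)) *
    ∫ σ in Set.Ioi (0 : ℝ),
      (σ + c) * σ ^ (2 * l - r - 1) * Real.exp (-σ ^ 2 / 2 - c * σ)

/-- The normalising constant `Z_β = ∫_0^∞ c^β e^{-c²/2} dc`. -/
noncomputable def Z (β : ℝ) : ℝ :=
  ∫ c in Set.Ioi (0 : ℝ), c ^ β * Real.exp (-c ^ 2 / 2)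

/-!
With `s = β + r` and `k = 2l - r - 1`, the weighted integrand is, up to `1 / k!`, the double
integral of `c ^ (s - 1) * σ ^ k * (σ + c) * exp (-(σ + c) ^ 2 / 2)`. Substituting `t = σ + c`
separates a Beta integral `∫₀ᵗ σ ^ k (t - σ) ^ (s - 1) dσ = t ^ (k + s) k! / (s)_{k+1}` from
the Gaussian moment `∫ t ^ (β + 2l) exp (-t ^ 2 / 2) dt`, which is `2 ^ l ((β + 1) / 2)_l Z_β`
because Gaussian moments are `2 ^ ((a - 1) / 2) Γ ((a + 1) / 2)`. Splitting the half-step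
rising factorial `((β + 1) / 2)_{2l - 1; 1/2}` once at `r - 1` and once into its even and odd
factors turns `2 ^ l ((β + 1) / 2)_l / (β + r)_{2l - r}` into the stated weight.
-/

open Function
open scoped ENNReal

lemma integrableOn_rpow_mul_exp_neg_sq_div_two {a : ℝ} (ha : -1 < a) :
    IntegrableOn (fun t : ℝ => t ^ a * Real.exp (-t ^ 2 / 2)) (Set.Ioi 0) := by
  convert integrableOn_rpow_mul_exp_neg_mul_sq (b := 1 / 2) (by norm_num) ha using 4
  ring

lemma integral_rpow_mul_exp_neg_sq_div_two {a : ℝ} (ha : -1 < a) :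
    ∫ t in Set.Ioi (0 : ℝ), t ^ a * Real.exp (-t ^ 2 / 2) =
      2 ^ ((a - 1) / 2) * Real.Gamma ((a + 1) / 2) := by
  have h := integral_rpow_mul_exp_neg_mul_rpow two_pos ha (by norm_num : (0 : ℝ) < 1 / 2)
  simp only [Real.rpow_two] at h
  rw [show (fun t : ℝ => t ^ a * Real.exp (-t ^ 2 / 2)) =
      fun t => t ^ a * Real.exp (-(1 / 2) * t ^ 2) by ext; ring_nf, h,
    one_div, Real.inv_rpow zero_le_two, ← Real.rpow_neg zero_le_two, ← Real.rpow_neg_one 2,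
    ← Real.rpow_add two_pos]
  ring_nf

lemma Real.Gamma_add_nat_eq_mul_prod {x : ℝ} (hx : 0 < x) (n : ℕ) :
    Real.Gamma (x + n) = Real.Gamma x * ∏ i ∈ range n, (x + i) := by
  induction n with
  | zero => simp
  | succ n ih =>
    rw [Nat.cast_succ, ← add_assoc, Real.Gamma_add_one (by positivity), ih, prod_range_succ]
    ring

lemma integral_rpow_add_two_mul_mul_exp_neg_sq_div_two {a : ℝ} (ha : -1 < a) (n : ℕ) :
    ∫ t in Set.Ioi (0 : ℝ), t ^ (a + 2 * n) * Real.exp (-t ^ 2 / 2) =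
      2 ^ n * (∏ i ∈ range n, ((a + 1) / 2 + i)) *
        ∫ t in Set.Ioi (0 : ℝ), t ^ a * Real.exp (-t ^ 2 / 2) := by
  have ha' : -1 < a + 2 * n := by linarith [(n.cast_nonneg : (0 : ℝ) ≤ n)]
  rw [integral_rpow_mul_exp_neg_sq_div_two ha, integral_rpow_mul_exp_neg_sq_div_two ha',
    show (a + 2 * n + 1) / 2 = (a + 1) / 2 + n by ring,
    Real.Gamma_add_nat_eq_mul_prod (by linarith) n,
    show (a + 2 * n - 1) / 2 = (a - 1) / 2 + n by ring,
    Real.rpow_add two_pos, Real.rpow_natCast]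
  ring

lemma integrableOn_Ioo_pow_mul_sub_rpow (m : ℕ) {s t : ℝ} (hs : 0 < s) (ht : 0 ≤ t) :
    IntegrableOn (fun σ : ℝ => σ ^ m * (t - σ) ^ (s - 1)) (Set.Ioo 0 t) := by
  have hsub : IntervalIntegrable (fun σ : ℝ => (t - σ) ^ (s - 1)) volume 0 t := by
    simpa using (intervalIntegral.intervalIntegrable_rpow' (r := s - 1) (a := t) (b := 0)
      (by linarith)).comp_sub_left t
  exact (intervalIntegrable_iff_integrableOn_Ioo_of_le ht).mp
    (hsub.continuousOn_mul (by fun_prop))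

lemma integral_Ioo_pow_mul_sub_rpow (m : ℕ) {s t : ℝ} (hs : 0 < s) (ht : 0 < t) :
    ∫ σ in Set.Ioo 0 t, σ ^ m * (t - σ) ^ (s - 1) =
      t ^ (m + s) * (m.factorial / ∏ j ∈ range (m + 1), (s + j)) := by
  have hbeta : Complex.betaIntegral (m + 1) s =
      m.factorial / ∏ j ∈ range (m + 1), ((s : ℂ) + j) := by
    rw [← Complex.betaIntegral_symm,
      Complex.betaIntegral_eval_nat_add_one_right (by simpa using hs) m]
  have hcomplex : ∫ σ in (0 : ℝ)..t, ((σ ^ m * (t - σ) ^ (s - 1) : ℝ) : ℂ) =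
      ∫ σ in (0 : ℝ)..t, (σ : ℂ) ^ ((m : ℂ) + 1 - 1) * ((t : ℂ) - σ) ^ ((s : ℂ) - 1) := by
    refine intervalIntegral.integral_congr fun σ hσ => ?_
    rw [Set.uIcc_of_le ht.le] at hσ
    push_cast
    rw [add_sub_cancel_right, Complex.cpow_natCast, ← Complex.ofReal_sub,
      ← Complex.ofReal_one, ← Complex.ofReal_sub, ← Complex.ofReal_cpow (by linarith [hσ.2])]
  apply Complex.ofReal_injective
  rw [← integral_Ioc_eq_integral_Ioo, ← intervalIntegral.integral_of_le ht.le,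
    ← intervalIntegral.integral_ofReal, hcomplex, Complex.betaIntegral_scaled _ _ ht, hbeta,
    show (m : ℂ) + 1 + s - 1 = ((m + s : ℝ) : ℂ) by push_cast; ring, ← Complex.ofReal_cpow ht.le]
  push_cast
  ring

lemma lintegral_Ioi_lintegral_Ioi_comp_add {F : ℝ → ℝ → ℝ≥0∞}
    (hF : Measurable (uncurry F)) :
    ∫⁻ c in Set.Ioi (0 : ℝ), ∫⁻ σ in Set.Ioi (0 : ℝ), F σ (σ + c) =
      ∫⁻ t in Set.Ioi (0 : ℝ), ∫⁻ σ in Set.Ioo (0 : ℝ) t, F σ t := by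
  have htranslate : ∀ σ ∈ Set.Ioi (0 : ℝ), ∫⁻ c in Set.Ioi (0 : ℝ), F σ (σ + c) =
      ∫⁻ t in Set.Ioi (0 : ℝ), {p : ℝ × ℝ | p.1 < p.2}.indicator (uncurry F) (σ, t) := by
    intro σ hσ
    rw [← lintegral_indicator measurableSet_Ioi, ← lintegral_indicator measurableSet_Ioi]
    conv_rhs => rw [← lintegral_add_left_eq_self (μ := volume) _ σ]
    congr 1
    ext c
    by_cases hc : 0 < c
    · simp [Set.indicator, hc, show 0 < σ + c by linarith [hσ.out]]
    · simp [Set.indicator, hc]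
  have hrestrict : ∀ t : ℝ, ∫⁻ σ in Set.Ioi (0 : ℝ),
      {p : ℝ × ℝ | p.1 < p.2}.indicator (uncurry F) (σ, t) =
        ∫⁻ σ in Set.Ioo (0 : ℝ) t, F σ t := by
    intro t
    rw [← Set.Iio_inter_Ioi, ← Measure.restrict_restrict measurableSet_Iio,
      ← lintegral_indicator measurableSet_Iio]
    rfl
  have hshift : Measurable (uncurry fun c σ => F σ (σ + c)) :=
    hF.comp (f := fun p : ℝ × ℝ => (p.2, p.2 + p.1)) (by fun_prop)
  have hcut : Measurable (uncurry fun σ t =>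
      {p : ℝ × ℝ | p.1 < p.2}.indicator (uncurry F) (σ, t)) :=
    hF.indicator (measurableSet_lt measurable_fst measurable_snd)
  rw [lintegral_lintegral_swap hshift.aemeasurable,
    setLIntegral_congr_fun measurableSet_Ioi htranslate,
    lintegral_lintegral_swap hcut.aemeasurable]
  simp_rw [hrestrict]

lemma integral_integral_eq_toReal_lintegral_lintegral {α γ : Type*} [MeasurableSpace α]
    [MeasurableSpace γ] {μ : Measure α} {ν : Measure γ} [SFinite μ] [SFinite ν] {G : α → γ → ℝ}
    (hG : AEStronglyMeasurable (uncurry G) (μ.prod ν))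
    (hnn : 0 ≤ᵐ[μ.prod ν] uncurry G)
    (hfin : ∫⁻ x, ∫⁻ y, ENNReal.ofReal (G x y) ∂ν ∂μ ≠ ∞) :
    ∫ x, ∫ y, G x y ∂ν ∂μ = (∫⁻ x, ∫⁻ y, ENNReal.ofReal (G x y) ∂ν ∂μ).toReal := by
  have hlint : ∫⁻ z, ENNReal.ofReal (uncurry G z) ∂μ.prod ν =
      ∫⁻ x, ∫⁻ y, ENNReal.ofReal (G x y) ∂ν ∂μ :=
    lintegral_prod _ hG.aemeasurable.ennreal_ofReal
  have hint : Integrable (uncurry G) (μ.prod ν) :=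
    ⟨hG, by rw [hasFiniteIntegral_iff_ofReal hnn, hlint]; exact hfin.lt_top⟩
  calc ∫ x, ∫ y, G x y ∂ν ∂μ = ∫ z, uncurry G z ∂μ.prod ν := (integral_prod _ hint).symm
    _ = _ := by rw [integral_eq_lintegral_of_nonneg_ae hnn hG, hlint]

lemma lintegral_Ioi_lintegral_Ioi_rpow_mul_pow_mul_exp (k : ℕ) {s : ℝ} (hs : 0 < s) :
    ∫⁻ c in Set.Ioi (0 : ℝ), ∫⁻ σ in Set.Ioi (0 : ℝ),
        ENNReal.ofReal (c ^ (s - 1) * ((σ + c) * σ ^ k * Real.exp (-(σ + c) ^ 2 / 2))) =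
      ENNReal.ofReal (k.factorial / (∏ j ∈ range (k + 1), (s + j)) *
        ∫ t in Set.Ioi (0 : ℝ), t ^ (k + s + 1) * Real.exp (-t ^ 2 / 2)) := by
  set B : ℝ := k.factorial / ∏ j ∈ range (k + 1), (s + j)
  have hF : Measurable (uncurry fun σ t : ℝ =>
      ENNReal.ofReal (σ ^ k * (t - σ) ^ (s - 1) * (t * Real.exp (-t ^ 2 / 2)))) := by
    fun_prop
  have hinner : ∀ t ∈ Set.Ioi (0 : ℝ), ∫⁻ σ in Set.Ioo 0 t,
      ENNReal.ofReal (σ ^ k * (t - σ) ^ (s - 1) * (t * Real.exp (-t ^ 2 / 2))) =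
        ENNReal.ofReal (B * (t ^ (k + s + 1) * Real.exp (-t ^ 2 / 2))) := by
    intro t ht
    have hnn : 0 ≤ᵐ[volume.restrict (Set.Ioo 0 t)]
        fun σ => σ ^ k * (t - σ) ^ (s - 1) * (t * Real.exp (-t ^ 2 / 2)) := by
      filter_upwards [ae_restrict_mem measurableSet_Ioo] with σ hσ
      have : 0 ≤ (t - σ) ^ (s - 1) := Real.rpow_nonneg (by linarith [hσ.2]) _
      have : 0 ≤ σ ^ k := pow_nonneg hσ.1.le k
      have : 0 ≤ t := ht.out.le
      positivity
    rw [← ofReal_integral_eq_lintegral_ofReal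
      ((integrableOn_Ioo_pow_mul_sub_rpow k hs ht.out.le).mul_const _) hnn, integral_mul_const,
      integral_Ioo_pow_mul_sub_rpow k hs ht, Real.rpow_add_one ht.out.ne']
    congr 1
    ring
  have hnn : 0 ≤ᵐ[volume.restrict (Set.Ioi 0)]
      fun t : ℝ => B * (t ^ ((k : ℝ) + s + 1) * Real.exp (-t ^ 2 / 2)) := by
    filter_upwards [ae_restrict_mem measurableSet_Ioi] with t ht
    have : 0 ≤ t ^ ((k : ℝ) + s + 1) := Real.rpow_nonneg ht.out.le _
    positivity
  calc _ = ∫⁻ c in Set.Ioi (0 : ℝ), ∫⁻ σ in Set.Ioi (0 : ℝ), ENNReal.ofReal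
        (σ ^ k * ((σ + c) - σ) ^ (s - 1) * ((σ + c) * Real.exp (-(σ + c) ^ 2 / 2))) := by
        refine lintegral_congr fun c => lintegral_congr fun σ => ?_
        rw [add_sub_cancel_left]
        ring_nf
    _ = ∫⁻ t in Set.Ioi (0 : ℝ),
          ENNReal.ofReal (B * (t ^ (k + s + 1) * Real.exp (-t ^ 2 / 2))) := by
        rw [lintegral_Ioi_lintegral_Ioi_comp_add hF,
          setLIntegral_congr_fun measurableSet_Ioi hinner]
    _ = _ := by
        rw [← ofReal_integral_eq_lintegral_ofReal
          ((integrableOn_rpow_mul_exp_neg_sq_div_two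
            (by linarith [(k.cast_nonneg : (0 : ℝ) ≤ k)])).const_mul B) hnn,
          integral_const_mul]

lemma integral_Ioi_integral_Ioi_rpow_mul_pow_mul_exp (k : ℕ) {s : ℝ} (hs : 0 < s) :
    ∫ c in Set.Ioi (0 : ℝ), ∫ σ in Set.Ioi (0 : ℝ),
        c ^ (s - 1) * ((σ + c) * σ ^ k * Real.exp (-(σ + c) ^ 2 / 2)) =
      k.factorial / (∏ j ∈ range (k + 1), (s + j)) *
        ∫ t in Set.Ioi (0 : ℝ), t ^ (k + s + 1) * Real.exp (-t ^ 2 / 2) := by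
  have hG : Measurable (uncurry fun c σ : ℝ =>
      c ^ (s - 1) * ((σ + c) * σ ^ k * Real.exp (-(σ + c) ^ 2 / 2))) := by
    fun_prop
  have hnn : 0 ≤ᵐ[(volume.restrict (Set.Ioi 0)).prod (volume.restrict (Set.Ioi 0))]
      uncurry fun c σ : ℝ =>
        c ^ (s - 1) * ((σ + c) * σ ^ k * Real.exp (-(σ + c) ^ 2 / 2)) := by
    rw [Measure.prod_restrict]
    refine ae_restrict_of_forall_mem (measurableSet_Ioi.prod measurableSet_Ioi) ?_
    rintro ⟨c, σ⟩ ⟨hc, hσ⟩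
    have : 0 ≤ c ^ (s - 1) := Real.rpow_nonneg hc.out.le _
    have : 0 ≤ c := hc.out.le
    have : 0 ≤ σ := hσ.out.le
    simp only [uncurry_apply_pair, Pi.zero_apply]
    positivity
  have hvalue : 0 ≤ k.factorial / (∏ j ∈ range (k + 1), (s + j)) *
      ∫ t in Set.Ioi (0 : ℝ), t ^ ((k : ℝ) + s + 1) * Real.exp (-t ^ 2 / 2) := by
    refine mul_nonneg (div_nonneg (Nat.cast_nonneg _) (prod_nonneg fun j _ => by positivity))
      (setIntegral_nonneg measurableSet_Ioi fun t ht => ?_)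
    exact mul_nonneg (Real.rpow_nonneg ht.out.le _) (Real.exp_pos _).le
  have hlint := lintegral_Ioi_lintegral_Ioi_rpow_mul_pow_mul_exp k hs
  rw [integral_integral_eq_toReal_lintegral_lintegral hG.aestronglyMeasurable hnn
    (hlint ▸ ENNReal.ofReal_ne_top), hlint, ENNReal.toReal_ofReal hvalue]

lemma integral_I_mul_rpow_mul_exp {β : ℝ} (hβ : -1 < β) {l r : ℕ} (hr1 : 1 ≤ r)
    (hrl : r < 2 * l) :
    ∫ c in Set.Ioi (0 : ℝ), I l r c * c ^ β * Real.exp (-c ^ 2 / 2) =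
      (∫ t in Set.Ioi (0 : ℝ), t ^ (β + 2 * l) * Real.exp (-t ^ 2 / 2)) /
        ∏ j ∈ range (2 * l - r), (β + r + j) := by
  set k := 2 * l - r - 1
  have hk : k + 1 = 2 * l - r := by omega
  have hkR : (k : ℝ) + (β + r) + 1 = β + 2 * l := by
    have h : ((k + 1 + r : ℕ) : ℝ) = ((2 * l : ℕ) : ℝ) := congrArg _ (by omega)
    push_cast at h
    linarith
  have hpt : ∀ c ∈ Set.Ioi (0 : ℝ), I l r c * c ^ β * Real.exp (-c ^ 2 / 2) =
      (k.factorial : ℝ)⁻¹ * ∫ σ in Set.Ioi (0 : ℝ),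
        c ^ (β + r - 1) * ((σ + c) * σ ^ k * Real.exp (-(σ + c) ^ 2 / 2)) := by
    intro c hc
    have hpow : c ^ (β + r - 1) = c ^ (r - 1) * c ^ β := by
      rw [← Real.rpow_natCast, ← Real.rpow_add hc.out, Nat.cast_sub hr1]
      ring_nf
    have hexp : ∀ σ : ℝ, (σ + c) * σ ^ k * Real.exp (-(σ + c) ^ 2 / 2) =
        (σ + c) * σ ^ k * Real.exp (-σ ^ 2 / 2 - c * σ) * Real.exp (-c ^ 2 / 2) := fun σ => by
      rw [mul_assoc _ (Real.exp _), ← Real.exp_add]; ring_nf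
    simp_rw [hpow, hexp]
    rw [integral_const_mul, integral_mul_const, I]
    ring
  have hs : 0 < β + r := by linarith [(show (1 : ℝ) ≤ r by exact_mod_cast hr1)]
  rw [setIntegral_congr_fun measurableSet_Ioi hpt, integral_const_mul,
    integral_Ioi_integral_Ioi_rpow_mul_pow_mul_exp k hs, hkR, hk]
  field_simp

lemma prod_range_two_mul_add_one_half (x : ℝ) (n : ℕ) :
    ∏ i ∈ range (2 * n + 1), (x + (i : ℝ) / 2) =
      (∏ i ∈ range (n + 1), (x + i)) * ∏ i ∈ range n, (x + 1 / 2 + i) := by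
  induction n with
  | zero => simp
  | succ n ih =>
    rw [show 2 * (n + 1) + 1 = 2 * n + 1 + 1 + 1 by ring]
    simp only [prod_range_succ] at ih ⊢
    push_cast at ih ⊢
    linear_combination (x + (2 * n + 1) / 2) * (x + n + 1) * ih

lemma two_pow_mul_prod_div_prod_eq_prod_half_div_prod {β : ℝ} (hβ : -1 < β) {l r : ℕ}
    (hr1 : 1 ≤ r) (hrl : r ≤ l) :
    2 ^ l * (∏ i ∈ range l, ((β + 1) / 2 + i)) / ∏ j ∈ range (2 * l - r), (β + r + j) =
      1 / 2 ^ (l - r) * (∏ i ∈ range (r - 1), ((β + 1) / 2 + (i : ℝ) / 2)) /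
        ∏ i ∈ range (l - 1), (β / 2 + 1 + (i : ℝ)) := by
  set x : ℝ := (β + 1) / 2
  set A := ∏ i ∈ range l, (x + i)
  set B := ∏ i ∈ range (l - 1), (β / 2 + 1 + (i : ℝ))
  set C := ∏ i ∈ range (r - 1), (x + (i : ℝ) / 2)
  set D := ∏ j ∈ range (2 * l - r), (x + ((r - 1 : ℕ) + j : ℝ) / 2)
  have hx : 0 < x := by simp only [x]; linarith
  have hB : 0 < B := prod_pos fun i _ => by linarith [(i.cast_nonneg : (0 : ℝ) ≤ i)]
  have hD : 0 < D := prod_pos fun i _ => by positivity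
  have hAB : ∏ i ∈ range (2 * (l - 1) + 1), (x + (i : ℝ) / 2) = A * B := by
    rw [prod_range_two_mul_add_one_half, Nat.sub_add_cancel (by omega)]
    congr 1
    exact prod_congr rfl fun i _ => by ring
  have hCD : ∏ i ∈ range (2 * (l - 1) + 1), (x + (i : ℝ) / 2) = C * D := by
    rw [show 2 * (l - 1) + 1 = (r - 1) + (2 * l - r) by omega, prod_range_add]
    push_cast
    rfl
  have hden : ∏ j ∈ range (2 * l - r), (β + r + j) = 2 ^ (2 * l - r) * D := by
    rw [← card_range (2 * l - r), ← prod_const, card_range, ← prod_mul_distrib]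
    refine prod_congr rfl fun j _ => ?_
    rw [Nat.cast_sub hr1]
    ring
  have hpow : (2 : ℝ) ^ (2 * l - r) = 2 ^ l * 2 ^ (l - r) := by
    rw [← pow_add]; congr 1; omega
  rw [hden, hpow]
  field_simp
  linear_combination hAB.symm.trans hCD

theorem stmt16 (β : ℝ) (hβ : -1 < β) (l r : ℕ) (hr1 : 1 ≤ r) (hrl : r ≤ l) :
    ∫ c in Set.Ioi (0 : ℝ), I l r c * c ^ β * Real.exp (-c ^ 2 / 2) / Z β
      = (1 / 2 ^ (l - r)) *
          (∏ i ∈ Finset.range (r - 1), ((β + 1) / 2 + (i : ℝ) / 2)) /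
          (∏ i ∈ Finset.range (l - 1), (β / 2 + 1 + (i : ℝ))) := by
  have hZ : Z β ≠ 0 := by
    rw [Z, integral_rpow_mul_exp_neg_sq_div_two hβ]
    exact (mul_pos (by positivity) (Real.Gamma_pos_of_pos (by linarith))).ne'
  rw [integral_div, integral_I_mul_rpow_mul_exp hβ hr1 (by omega),
    integral_rpow_add_two_mul_mul_exp_neg_sq_div_two hβ, ← Z, mul_div_right_comm,
    mul_div_cancel_right₀ _ hZ, two_pow_mul_prod_div_prod_eq_prod_half_div_prod hβ hr1 hrl]
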